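/- arXiv:1709.07550 — 4 statements merged into one kernel-verified Lean document; each statement's English description precedes it below -/
import Mathlib

section
/- Let g : ℂ → ℂ be holomorphic on ℂ \ {0} and let λ ∈ ℂ with λ ≠ 0 and |λ| ≠ 1. If λ · g(λz) = g(z) for all z ≠ 0 (i.e., the holomorphic 1-form ω = g(z)dz on ℂ \ {0} is invariant under the hyperbolic linear map f(z) = λz), then g(z) = g(1)/z for every z ≠ 0; equivalently, ω is a constant multiple of dz/z. -/
/-! Pulled back along `exp : ℂ → ℂ \ {0}`, an invariant function `h(λz) = h(z)` becomes an entire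
function with the periods `log λ` and `2πi`, which are `ℝ`-independent precisely because
`Re (log λ) = log |λ| ≠ 0`. A doubly periodic entire function is bounded, hence constant by
Liouville. Apply this to `h(z) = z g(z)`. -/

open Complex

namespace PeriodPair

theorem apply_eq_apply_of_differentiable_of_periodic (L : PeriodPair) {F : ℂ → ℂ}
    (hF : Differentiable ℂ F) (h₁ : Function.Periodic F L.ω₁) (h₂ : Function.Periodic F L.ω₂)
    (z w : ℂ) : F z = F w := by
  have hperiodic : ∀ z l, l ∈ L.lattice → F (z + l) = F z := by
    rintro z _ hl
    obtain ⟨m, n, rfl⟩ := mem_lattice.mp hl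
    rw [← add_assoc, h₂.int_mul n, h₁.int_mul m]
  exact hF.apply_eq_apply_of_bounded
    (IsZLattice.isCompact_range_of_periodic L.lattice F hF.continuous hperiodic).isBounded z w

end PeriodPair

theorem Complex.linearIndependent_pair_two_pi_I_of_re_ne_zero {μ : ℂ} (hμ : μ.re ≠ 0) :
    LinearIndependent ℝ ![μ, 2 * Real.pi * I] := by
  refine LinearIndependent.pair_iff.mpr fun s t hst => ?_
  obtain rfl : s = 0 := by simpa [hμ] using congrArg re hst
  exact ⟨rfl, by simpa [Real.pi_ne_zero] using congrArg im hst⟩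

theorem Complex.apply_eq_apply_one_of_apply_mul_eq {h : ℂ → ℂ} {lam : ℂ}
    (hh : DifferentiableOn ℂ h {0}ᶜ) (hlam0 : lam ≠ 0) (hlam1 : ‖lam‖ ≠ 1)
    (hinv : ∀ z, z ≠ 0 → h (lam * z) = h z) {z : ℂ} (hz : z ≠ 0) : h z = h 1 := by
  have hre : (log lam).re ≠ 0 := by
    rw [log_re]
    exact Real.log_ne_zero_of_pos_of_ne_one (norm_pos_iff.mpr hlam0) hlam1
  let L : PeriodPair :=
    ⟨log lam, 2 * Real.pi * I, linearIndependent_pair_two_pi_I_of_re_ne_zero hre⟩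
  have hF : Differentiable ℂ (h ∘ exp) := fun w =>
    (hh.differentiableAt (isOpen_compl_singleton.mem_nhds (exp_ne_zero w))).comp w
      (differentiable_exp w)
  have h₁ : Function.Periodic (h ∘ exp) L.ω₁ := fun w => by
    simp [L, exp_add, exp_log hlam0, mul_comm _ lam, hinv _ (exp_ne_zero w)]
  have h₂ : Function.Periodic (h ∘ exp) L.ω₂ := fun w => by
    simp [L, exp_periodic w]
  simpa [exp_log hz] using L.apply_eq_apply_of_differentiable_of_periodic hF h₁ h₂ (log z) 0

/-- If `g` is holomorphic on `ℂ \ {0}` and the 1-form `g(z) dz` is invariant under the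
hyperbolic linear map `z ↦ λ z` (i.e. `λ g(λ z) = g z`), with `λ ≠ 0` and `|λ| ≠ 1`,
then `g z = g 1 / z` for every `z ≠ 0`. -/
theorem stmt_0 (g : ℂ → ℂ) (lam : ℂ)
    (hg : DifferentiableOn ℂ g {(0 : ℂ)}ᶜ)
    (hlam0 : lam ≠ 0) (hlam1 : ‖lam‖ ≠ 1)
    (hinv : ∀ z : ℂ, z ≠ 0 → lam * g (lam * z) = g z) :
    ∀ z : ℂ, z ≠ 0 → g z = g 1 / z := by
  intro z hz
  have hconst := Complex.apply_eq_apply_one_of_apply_mul_eq (h := fun w => w * g w)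
    (differentiableOn_id.mul hg) hlam0 hlam1 (fun w hw => by rw [mul_right_comm, hinv w hw, mul_comm]) hz
  rw [eq_div_iff hz, mul_comm, hconst, one_mul]
end

section
/- Let g : ℂ → ℂ be holomorphic on the punctured unit disc 𝔻* = {z ∈ ℂ : 0 < |z| < 1} and let λ ∈ ℂ with 0 < |λ| < 1. If λ · g(λz) = g(z) for all z ∈ 𝔻*, then there exists a constant c ∈ ℂ such that g(z) = c/z for all z ∈ 𝔻*. -/
/-! The function `h z = z * g z` is holomorphic on `𝔻*` and invariant under `z ↦ λ z`. Every
orbit meets the compact annulus `|λ| ρ ≤ |z| ≤ ρ`, so `h` is bounded near `0`, and by Riemann's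
removable singularity theorem it has a limit `c` at `0`. Since `λⁿ z → 0` and `h` is constant
along this orbit, `h z = c`. -/

open Filter Topology Set Metric

section NormedField

variable {𝕜 : Type*} [NormedField 𝕜]

theorem mapsTo_const_mul_ball_diff_zero {lam : 𝕜} (hlam0 : lam ≠ 0) (hlam1 : ‖lam‖ ≤ 1) (r : ℝ) :
    MapsTo (lam * ·) (ball 0 r \ {0}) (ball 0 r \ {0}) := by
  rintro z ⟨hzr, hz0⟩
  rw [mem_ball_zero_iff] at hzr
  refine ⟨?_, mul_ne_zero hlam0 hz0⟩
  rw [mem_ball_zero_iff, norm_mul]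
  calc ‖lam‖ * ‖z‖ ≤ 1 * ‖z‖ := by gcongr
    _ < r := by rwa [one_mul]

theorem apply_pow_mul_eq_of_mapsTo {β : Type*} {S : Set 𝕜} {lam : 𝕜} {h : 𝕜 → β}
    (hS : MapsTo (lam * ·) S S) (hinv : ∀ z ∈ S, h (lam * z) = h z) (n : ℕ) :
    ∀ z ∈ S, h (lam ^ n * z) = h z := by
  induction n with
  | zero => simp
  | succ n ih =>
    intro z hz
    rw [pow_succ, mul_assoc, ih _ (hS hz), hinv z hz]

theorem exists_eq_pow_mul_mem_annulus {lam : 𝕜} (hlam0 : lam ≠ 0) (hlam1 : ‖lam‖ < 1)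
    {ρ : ℝ} {z : 𝕜} (hz0 : z ≠ 0) (hzρ : ‖z‖ ≤ ρ) :
    ∃ n : ℕ, ∃ w, z = lam ^ n * w ∧ ‖lam‖ * ρ ≤ ‖w‖ ∧ ‖w‖ ≤ ρ := by
  have hz : 0 < ‖z‖ := norm_pos_iff.2 hz0
  have hlam : 0 < ‖lam‖ := norm_pos_iff.2 hlam0
  obtain ⟨n, hle, hlt⟩ := exists_nat_pow_near ((one_le_div hz).2 hzρ) (one_lt_inv₀ hlam |>.2 hlam1)
  have hw : ‖(lam ^ n)⁻¹ * z‖ = ‖z‖ * ‖lam‖⁻¹ ^ n := by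
    rw [norm_mul, norm_inv, norm_pow, inv_pow, mul_comm]
  refine ⟨n, (lam ^ n)⁻¹ * z, by field_simp, ?_, ?_⟩
  · rw [pow_succ, div_lt_iff₀ hz] at hlt
    rw [hw]
    calc ‖lam‖ * ρ ≤ ‖lam‖ * (‖lam‖⁻¹ ^ n * ‖lam‖⁻¹ * ‖z‖) := by gcongr
      _ = ‖z‖ * ‖lam‖⁻¹ ^ n := by field_simp
  · rw [hw, ← le_div_iff₀' hz]
    exact hle

variable {E : Type*} [NormedAddCommGroup E]

theorem isBoundedUnder_norm_of_mul_invariant [ProperSpace 𝕜] {h : 𝕜 → E} {lam : 𝕜} {r : ℝ}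
    (hr : 0 < r) (hlam0 : lam ≠ 0) (hlam1 : ‖lam‖ < 1) (hh : ContinuousOn h (ball 0 r \ {0}))
    (hinv : ∀ z ∈ ball 0 r \ {0}, h (lam * z) = h z) :
    IsBoundedUnder (· ≤ ·) (𝓝[≠] 0) fun z => ‖h z‖ := by
  obtain ⟨ρ, hρ, hρr⟩ := exists_between hr
  have hK : closedBall (0 : 𝕜) ρ \ ball 0 (‖lam‖ * ρ) ⊆ ball 0 r \ {0} := by
    rintro w ⟨hwρ, hwlam⟩
    rw [mem_closedBall_zero_iff] at hwρ
    rw [mem_ball_zero_iff, not_lt] at hwlam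
    refine ⟨mem_ball_zero_iff.2 (by linarith), fun hw0 => ?_⟩
    rw [hw0, norm_zero] at hwlam
    have : 0 < ‖lam‖ * ρ := mul_pos (norm_pos_iff.2 hlam0) hρ
    linarith
  obtain ⟨C, hC⟩ := ((isCompact_closedBall 0 ρ).diff isOpen_ball).exists_bound_of_continuousOn
    (hh.mono hK)
  refine ⟨C, eventually_map.2 ?_⟩
  filter_upwards [nhdsWithin_le_nhds (closedBall_mem_nhds 0 hρ), self_mem_nhdsWithin]
    with z hzρ hz0
  obtain ⟨n, w, rfl, hlamw, hwρ⟩ :=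
    exists_eq_pow_mul_mem_annulus hlam0 hlam1 hz0 (mem_closedBall_zero_iff.1 hzρ)
  have hwK : w ∈ closedBall 0 ρ \ ball 0 (‖lam‖ * ρ) :=
    ⟨mem_closedBall_zero_iff.2 hwρ, by rw [mem_ball_zero_iff, not_lt]; exact hlamw⟩
  rw [apply_pow_mul_eq_of_mapsTo (mapsTo_const_mul_ball_diff_zero hlam0 hlam1.le r) hinv n w
    (hK hwK)]
  exact hC w hwK

end NormedField

variable {E : Type*} [NormedAddCommGroup E] [NormedSpace ℂ E] [CompleteSpace E]

theorem exists_tendsto_nhdsNE_zero_of_mul_invariant {h : ℂ → E} {lam : ℂ} {r : ℝ}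
    (hr : 0 < r) (hlam0 : lam ≠ 0) (hlam1 : ‖lam‖ < 1)
    (hh : DifferentiableOn ℂ h (ball 0 r \ {0}))
    (hinv : ∀ z ∈ ball 0 r \ {0}, h (lam * z) = h z) :
    ∃ c, Tendsto h (𝓝[≠] 0) (𝓝 c) := by
  have hd : ∀ᶠ z in 𝓝[≠] (0 : ℂ), DifferentiableAt ℂ h z := by
    filter_upwards [sdiff_mem_nhdsWithin_compl (ball_mem_nhds 0 hr) {0}] with z hz
    exact hh.differentiableAt ((isOpen_ball.sdiff isClosed_singleton).mem_nhds hz)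
  obtain ⟨C, hC⟩ := isBoundedUnder_norm_of_mul_invariant hr hlam0 hlam1 hh.continuousOn hinv
  refine ⟨_, Complex.tendsto_limUnder_of_differentiable_on_punctured_nhds_of_bounded_under hd ?_⟩
  refine ⟨C + ‖h 0‖, eventually_map.2 ?_⟩
  filter_upwards [eventually_map.1 hC] with z hz
  exact (norm_sub_le _ _).trans (by gcongr)

theorem exists_eqOn_const_of_mul_invariant {h : ℂ → E} {lam : ℂ} {r : ℝ}
    (hr : 0 < r) (hlam0 : lam ≠ 0) (hlam1 : ‖lam‖ < 1)
    (hh : DifferentiableOn ℂ h (ball 0 r \ {0}))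
    (hinv : ∀ z ∈ ball 0 r \ {0}, h (lam * z) = h z) :
    ∃ c, EqOn h (fun _ => c) (ball 0 r \ {0}) := by
  obtain ⟨c, hc⟩ := exists_tendsto_nhdsNE_zero_of_mul_invariant hr hlam0 hlam1 hh hinv
  refine ⟨c, fun z hz => tendsto_nhds_unique (tendsto_const_nhds (f := atTop (α := ℕ))) ?_⟩
  have hpow : Tendsto (fun n : ℕ => lam ^ n * z) atTop (𝓝[≠] 0) := by
    refine tendsto_nhdsWithin_of_tendsto_nhds_of_eventually_within _ ?_
      (Eventually.of_forall fun n => mul_ne_zero (pow_ne_zero n hlam0) hz.2)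
    simpa using (tendsto_pow_atTop_nhds_zero_of_norm_lt_one hlam1).mul_const z
  refine (hc.comp hpow).congr fun n => ?_
  exact apply_pow_mul_eq_of_mapsTo (mapsTo_const_mul_ball_diff_zero hlam0 hlam1.le r) hinv n z hz

/-- If `g` is holomorphic on the punctured unit disc `𝔻* = {z : 0 < |z| < 1}` and
`λ g(λ z) = g z` on `𝔻*` for some `λ` with `0 < |λ| < 1`, then there is a constant `c`
with `g z = c / z` on `𝔻*`. -/
theorem stmt_1 (g : ℂ → ℂ) (lam : ℂ)
    (hg : DifferentiableOn ℂ g {z : ℂ | 0 < ‖z‖ ∧ ‖z‖ < 1})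
    (hlam0 : 0 < ‖lam‖) (hlam1 : ‖lam‖ < 1)
    (hinv : ∀ z ∈ {z : ℂ | 0 < ‖z‖ ∧ ‖z‖ < 1},
      lam * g (lam * z) = g z) :
    ∃ c : ℂ, ∀ z ∈ {z : ℂ | 0 < ‖z‖ ∧ ‖z‖ < 1}, g z = c / z := by
  have hdisc : {z : ℂ | 0 < ‖z‖ ∧ ‖z‖ < 1} = ball 0 1 \ {0} := by
    ext z
    simp [norm_pos_iff, and_comm]
  rw [hdisc] at hg hinv ⊢
  obtain ⟨c, hc⟩ := exists_eqOn_const_of_mul_invariant (h := fun z => z * g z) one_pos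
    (norm_pos_iff.1 hlam0) hlam1 (differentiableOn_id.mul hg) fun z hz => by
      rw [← hinv z hz]; ring
  exact ⟨c, fun z hz => (eq_div_iff hz.2).2 (by rw [mul_comm]; exact hc hz)⟩
end

section
/- Let h : ℂ → ℂ be holomorphic on ℂ \ {0} and let λ ∈ ℂ with 0 < |λ| < 1. If h(λz) = h(z) for all z ≠ 0, then h is constant on ℂ \ {0}, i.e., h(z) = h(w) for all nonzero z, w. -/
/-!
Multiplying by integer powers of `λ` moves every `z ≠ 0` into the compact annulus
`|λ| ≤ |z| ≤ 1`, so `h` is bounded on `ℂ \ {0}` and `0` is a removable singularity.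
The extension `H` still satisfies `H (λ z) = H z`, now for every `z`; since `λⁿ z → 0`,
continuity of `H` at `0` gives `H z = H 0`.
-/

open Filter Metric Set Topology

theorem apply_zpow_mul_eq_of_apply_mul_eq {K α : Type*} [GroupWithZero K] {f : K → α} {c : K}
    (hc : c ≠ 0) (hf : ∀ z, z ≠ 0 → f (c * z) = f z) (n : ℤ) {z : K} (hz : z ≠ 0) :
    f (c ^ n * z) = f z := by
  induction n using Int.induction_on with
  | zero => simp
  | succ n ih =>
    rw [add_comm, zpow_one_add₀ hc, mul_assoc, hf _ (mul_ne_zero (zpow_ne_zero _ hc) hz), ih]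
  | pred n ih =>
    have hw : c ^ (-(n : ℤ) - 1) * z ≠ 0 := mul_ne_zero (zpow_ne_zero _ hc) hz
    rw [← hf _ hw, ← mul_assoc, ← zpow_one_add₀ hc, add_sub_cancel, ih]

theorem exists_zpow_mul_mem_annulus {K : Type*} [NormedDivisionRing K] {c : K}
    (hc₀ : 0 < ‖c‖) (hc₁ : ‖c‖ < 1) {z : K} (hz : z ≠ 0) :
    ∃ n : ℤ, c ^ n * z ∈ closedBall 0 1 \ ball 0 ‖c‖ := by
  obtain ⟨n, hn_le, hn_lt⟩ := exists_mem_Ico_zpow (norm_pos_iff.2 hz) (one_lt_inv₀ hc₀ |>.2 hc₁)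
  rw [inv_zpow] at hn_le hn_lt
  have hpos : 0 < ‖c‖ ^ (n + 1) := zpow_pos hc₀ _
  refine ⟨n + 1, ?_, ?_⟩
  · rw [mem_closedBall_zero_iff, norm_mul, norm_zpow]
    exact ((lt_inv_mul_iff₀ hpos).1 (by rwa [mul_one])).le
  · rw [mem_ball_zero_iff, not_lt, norm_mul, norm_zpow]
    calc ‖c‖ = ‖c‖ ^ (n + 1) * (‖c‖ ^ n)⁻¹ := by rw [zpow_add_one₀ hc₀.ne']; field_simp
      _ ≤ ‖c‖ ^ (n + 1) * ‖z‖ := by gcongr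

theorem exists_bound_of_apply_mul_eq {K E : Type*} [NormedDivisionRing K] [ProperSpace K]
    [SeminormedAddCommGroup E] {f : K → E} {c : K} (hfc : ContinuousOn f {0}ᶜ)
    (hc₀ : 0 < ‖c‖) (hc₁ : ‖c‖ < 1) (hf : ∀ z, z ≠ 0 → f (c * z) = f z) :
    ∃ C, ∀ z, z ≠ 0 → ‖f z‖ ≤ C := by
  have hA : closedBall (0 : K) 1 \ ball 0 ‖c‖ ⊆ {0}ᶜ := fun z hz h0 => by
    simp_all
  obtain ⟨C, hC⟩ := ((isCompact_closedBall 0 1).diff isOpen_ball).exists_bound_of_continuousOn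
    (hfc.mono hA)
  refine ⟨C, fun z hz => ?_⟩
  obtain ⟨n, hn⟩ := exists_zpow_mul_mem_annulus hc₀ hc₁ hz
  rw [← apply_zpow_mul_eq_of_apply_mul_eq (norm_pos_iff.1 hc₀) hf n hz]
  exact hC _ hn

theorem apply_eq_apply_zero_of_apply_mul_eq {K X : Type*} [NormedRing K] [TopologicalSpace X]
    [T2Space X] {f : K → X} {c : K} (hf0 : ContinuousAt f 0) (hc : ‖c‖ < 1)
    (hf : ∀ z, f (c * z) = f z) (z : K) : f z = f 0 := by
  have hpow : ∀ n : ℕ, f (c ^ n * z) = f z := fun n => by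
    induction n with
    | zero => simp
    | succ n ih => rw [pow_succ', mul_assoc, hf, ih]
  have hlim : Tendsto (fun n : ℕ => c ^ n * z) atTop (𝓝 0) := by
    simpa using (tendsto_pow_atTop_nhds_zero_of_norm_lt_one hc).mul_const z
  exact tendsto_nhds_unique (tendsto_const_nhds.congr fun n => (hpow n).symm) (hf0.tendsto.comp hlim)

/-- If `h` is holomorphic on `ℂ \ {0}` and `h(λ z) = h z` for all `z ≠ 0`, where
`0 < |λ| < 1`, then `h` is constant on `ℂ \ {0}`. -/
theorem stmt_2 (h : ℂ → ℂ) (lam : ℂ)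
    (hh : DifferentiableOn ℂ h {(0 : ℂ)}ᶜ)
    (hlam0 : 0 < ‖lam‖) (hlam1 : ‖lam‖ < 1)
    (hinv : ∀ z : ℂ, z ≠ 0 → h (lam * z) = h z) :
    ∀ z w : ℂ, z ≠ 0 → w ≠ 0 → h z = h w := by
  obtain ⟨C, hC⟩ := exists_bound_of_apply_mul_eq hh.continuousOn hlam0 hlam1 hinv
  set H := Function.update h 0 (limUnder (𝓝[≠] 0) h)
  have hH : ∀ z, z ≠ 0 → H z = h z := fun z hz => Function.update_of_ne hz _ _
  have hHdiff : Differentiable ℂ H := by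
    rw [← differentiableOn_univ]
    refine Complex.differentiableOn_update_limUnder_of_bddAbove univ_mem
      (hh.mono fun z hz => hz.2) ⟨C, ?_⟩
    rintro _ ⟨z, hz, rfl⟩
    exact hC z hz.2
  have hHinv : ∀ z, H (lam * z) = H z := fun z => by
    rcases eq_or_ne z 0 with rfl | hz
    · rw [mul_zero]
    · rw [hH _ (mul_ne_zero (norm_pos_iff.1 hlam0) hz), hH z hz, hinv z hz]
  have hHconst := apply_eq_apply_zero_of_apply_mul_eq hHdiff.continuous.continuousAt hlam1 hHinv
  intro z w hz hw
  rw [← hH z hz, ← hH w hw, hHconst z, hHconst w]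
end

section
/- Let k ≥ 1 be a natural number, λ ∈ ℂ with λ ≠ 0, μ ∈ ℂ, and let U ⊆ ℂ \ {0} be open. Let h : ℂ → ℂ be holomorphic on U with h(z) ≠ 0 and h(z)^k · (1 + μ z^k) = λ^k · z^k for all z ∈ U. Let g : ℂ → ℂ and g̃ : ℂ → ℂ satisfy g̃(h(z)) · h'(z) = g(z) for all z ∈ U (i.e., the 1-forms g(z)dz and g̃(z̃)dz̃ agree under the change of coordinate z̃ = h(z)). Then g̃(h(z)) · h(z)^{k+1} = λ^k · g(z) · z^{k+1} for all z ∈ U. -/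
/-- Let `h` be a holomorphic nonvanishing branch on an open `U ⊆ ℂ \ {0}` of an element
of `ℍ_k` (`h(z)^k (1 + μ z^k) = λ^k z^k` on `U`), and suppose the 1-forms `g(z) dz` and
`g̃(z̃) dz̃` agree under the change of coordinate `z̃ = h(z)`, i.e.
`g̃(h z) h'(z) = g z` on `U`. Then `g̃(h z) h(z)^{k+1} = λ^k g(z) z^{k+1}` on `U`. -/
theorem stmt_8 (k : ℕ) (hk : 1 ≤ k) (lam μ : ℂ) (hlam : lam ≠ 0)
    (U : Set ℂ) (hUopen : IsOpen U) (hU0 : U ⊆ {(0 : ℂ)}ᶜ)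
    (h : ℂ → ℂ) (hdiff : DifferentiableOn ℂ h U)
    (hne : ∀ z ∈ U, h z ≠ 0)
    (hrel : ∀ z ∈ U, (h z) ^ k * (1 + μ * z ^ k) = lam ^ k * z ^ k)
    (g gt : ℂ → ℂ)
    (hg : ∀ z ∈ U, gt (h z) * deriv h z = g z) :
    ∀ z ∈ U, gt (h z) * (h z) ^ (k + 1) = lam ^ k * g z * z ^ (k + 1) := by
  obtain ⟨m, rfl⟩ : ∃ m, k = m + 1 := ⟨k - 1, (Nat.succ_pred_eq_of_pos hk).symm⟩
  set k := m + 1 with hkdef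
  intro z hz
  have hz0 : z ≠ 0 := hU0 hz
  have hhz : h z ≠ 0 := hne z hz
  have hR := hrel z hz
  have hda : DifferentiableAt ℂ h z := hdiff.differentiableAt (hUopen.mem_nhds hz)
  set D := deriv h z with hD
  have hd1 : HasDerivAt (fun w => h w ^ k * (1 + μ * w ^ k))
      ((k : ℂ) * h z ^ (k - 1) * D * (1 + μ * z ^ k) + h z ^ k * (μ * ((k : ℂ) * z ^ (k - 1)))) z :=
    (hda.hasDerivAt.pow k).mul (((hasDerivAt_pow k z).const_mul μ).const_add 1)
  have hd2 : HasDerivAt (fun w => lam ^ k * w ^ k) (lam ^ k * ((k : ℂ) * z ^ (k - 1))) z :=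
    (hasDerivAt_pow k z).const_mul _
  have heq : (fun w => h w ^ k * (1 + μ * w ^ k)) =ᶠ[nhds z] (fun w => lam ^ k * w ^ k) := by
    filter_upwards [hUopen.mem_nhds hz] with w hw
    exact hrel w hw
  have hE : (k : ℂ) * h z ^ (k - 1) * D * (1 + μ * z ^ k) + h z ^ k * (μ * ((k : ℂ) * z ^ (k - 1)))
      = lam ^ k * ((k : ℂ) * z ^ (k - 1)) :=
    (hd1.congr_of_eventuallyEq heq.symm).unique hd2
  have hkm : k - 1 = m := rfl
  rw [hkm] at hE
  have hkc : ((k : ℕ) : ℂ) ≠ 0 := by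
    simp [hkdef]
    exact_mod_cast Nat.succ_ne_zero m
  have key : h z ^ (k + 1) = lam ^ k * D * z ^ (k + 1) := by
    refine mul_left_cancel₀ hkc (b := h z ^ (k + 1)) (c := lam ^ k * D * z ^ (k + 1)) ?_
    push_cast [hkdef] at hE hR ⊢
    linear_combination (((m : ℂ) + 1) * (h z + z * D)) * hR - (z * h z) * hE
  rw [← hg z hz]
  calc gt (h z) * h z ^ (k + 1) = gt (h z) * (lam ^ k * D * z ^ (k + 1)) := by rw [key]
    _ = lam ^ k * (gt (h z) * D) * z ^ (k + 1) := by ring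
end
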